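/- For each n ≥ 3 let G_n be the straight linear 2-tree on n vertices, and let H_n be any connected subgraph of G_n whose vertex set contains both 1 and n. Then r_{H_n}(1, n) → ∞ as n → ∞; in particular, taking H_n = G_n, r_{G_n}(1, n) → ∞ as n → ∞. -/

import Mathlib

/-- The straight linear 2-tree on `n` vertices: vertices `0, …, n-1` (representing
`1, …, n`), with distinct vertices adjacent iff they differ by at most 2. -/
def linear2Tree (n : ℕ) : SimpleGraph (Fin n) where
  Adj i j := i ≠ j ∧ i.val ≤ j.val + 2 ∧ j.val ≤ i.val + 2
  symm := by
    constructor
    intro i j h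
    exact ⟨h.1.symm, h.2.2, h.2.1⟩
  loopless := by
    constructor
    intro i h
    exact h.1 rfl

open scoped Classical in
/-- The combinatorial Laplacian (degree matrix minus adjacency matrix) of a graph on `Fin n`. -/
noncomputable def lap {n : ℕ} (G : SimpleGraph (Fin n)) : Matrix (Fin n) (Fin n) ℝ :=
  Matrix.of fun a b =>
    if a = b then ∑ c : Fin n, (if G.Adj a c then (1 : ℝ) else 0)
    else if G.Adj a b then -1 else 0

/-- The source vector `e_i - e_j`. -/
def esrc {n : ℕ} (i j : Fin n) : Fin n → ℝ :=
  fun t => (if t = i then 1 else 0) - (if t = j then 1 else 0)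

/-- `IsResistance G i j r` says: a solution `v` of `L v = e_i - e_j` exists, and every such
solution satisfies `r = v i - v j`; i.e. the resistance distance between `i` and `j` is `r`. -/
def IsResistance {n : ℕ} (G : SimpleGraph (Fin n)) (i j : Fin n) (r : ℝ) : Prop :=
  (∃ v : Fin n → ℝ, (lap G).mulVec v = esrc i j) ∧
  ∀ v : Fin n → ℝ, (lap G).mulVec v = esrc i j → r = v i - v j

open scoped Classical in
/-- The Laplacian of a subgraph `H` of the straight linear 2-tree, as a matrix indexed by all
vertices of the ambient graph (rows and columns of vertices outside `H` are zero). -/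
noncomputable def subLap {n : ℕ} (H : (linear2Tree n).Subgraph) :
    Matrix (Fin n) (Fin n) ℝ :=
  Matrix.of fun a b =>
    if a = b then ∑ c : Fin n, (if H.Adj a c then (1 : ℝ) else 0)
    else if H.Adj a b then -1 else 0

/-- `IsResistanceSub H i j r` says the resistance distance between vertices `i, j` of the
subgraph `H` is `r`: a solution `v` of `L_H v = e_i - e_j` exists and every such solution
satisfies `r = v i - v j`. -/
def IsResistanceSub {n : ℕ} (H : (linear2Tree n).Subgraph) (i j : Fin n) (r : ℝ) : Prop :=
  (∃ v : Fin n → ℝ, (subLap H).mulVec v = esrc i j) ∧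
  ∀ v : Fin n → ℝ, (subLap H).mulVec v = esrc i j → r = v i - v j

open scoped Classical

namespace Stmt5Aux

variable {n : ℕ}

noncomputable def w (H : (linear2Tree n).Subgraph) (a b : Fin n) : ℝ :=
  if H.Adj a b then 1 else 0

lemma w_symm (H : (linear2Tree n).Subgraph) (a b : Fin n) : w H a b = w H b a := by
  unfold w; simp [SimpleGraph.Subgraph.adj_comm]

lemma w_self (H : (linear2Tree n).Subgraph) (a : Fin n) : w H a a = 0 := by
  unfold w
  simp only [ite_eq_right_iff]
  intro h; exact absurd rfl h.ne

lemma w_idem (H : (linear2Tree n).Subgraph) (a b : Fin n) :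
    w H a b * w H a b = w H a b := by
  unfold w; split <;> norm_num

lemma subLap_eq (H : (linear2Tree n).Subgraph) (a b : Fin n) :
    subLap H a b = (if a = b then ∑ c, w H a c else 0) - w H a b := by
  unfold subLap w
  by_cases h : a = b
  · subst h
    simp only [Matrix.of_apply, if_pos rfl]
    have : ¬ H.Adj a a := fun h' => absurd rfl h'.ne
    simp [this]
  · simp only [Matrix.of_apply, if_neg h]
    split <;> norm_num

lemma mulVec_eq (H : (linear2Tree n).Subgraph) (g : Fin n → ℝ) (a : Fin n) :
    (subLap H).mulVec g a = ∑ b, w H a b * (g a - g b) := by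
  unfold Matrix.mulVec dotProduct
  have h1 : ∀ b : Fin n, subLap H a b * g b
      = (if a = b then (∑ c, w H a c) * g b else 0) - w H a b * g b := by
    intro b
    rw [subLap_eq, sub_mul, ite_mul, zero_mul]
  calc (∑ b, subLap H a b * g b)
      = ∑ b, ((if a = b then (∑ c, w H a c) * g b else 0) - w H a b * g b) := by
        exact Finset.sum_congr rfl fun b _ => h1 b
    _ = (∑ c, w H a c) * g a - ∑ b, w H a b * g b := by
        rw [Finset.sum_sub_distrib, Finset.sum_ite_eq]
        simp
    _ = ∑ b, w H a b * (g a - g b) := by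
        rw [Finset.sum_mul, ← Finset.sum_sub_distrib]
        exact Finset.sum_congr rfl fun b _ => by ring

noncomputable def Q (H : (linear2Tree n).Subgraph) (f g : Fin n → ℝ) : ℝ :=
  ∑ a, ∑ b, w H a b * (f a - f b) * (g a - g b)

lemma dot_lap (H : (linear2Tree n).Subgraph) (f g : Fin n → ℝ) :
    Q H f g = 2 * ∑ a, f a * (subLap H).mulVec g a := by
  have hS : (∑ a, f a * (subLap H).mulVec g a)
      = ∑ a, ∑ b, w H a b * f a * (g a - g b) := by
    refine Finset.sum_congr rfl fun a _ => ?_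
    rw [mulVec_eq, Finset.mul_sum]
    exact Finset.sum_congr rfl fun b _ => by ring
  have hS2 : (∑ a : Fin n, ∑ b : Fin n, w H a b * f b * (g a - g b))
      = - ∑ a : Fin n, ∑ b : Fin n, w H a b * f a * (g a - g b) := by
    rw [Finset.sum_comm, ← Finset.sum_neg_distrib]
    refine Finset.sum_congr rfl fun a _ => ?_
    rw [← Finset.sum_neg_distrib]
    refine Finset.sum_congr rfl fun b _ => ?_
    rw [w_symm]
    ring
  unfold Q
  rw [hS]
  have : ∀ a b : Fin n, w H a b * (f a - f b) * (g a - g b)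
      = w H a b * f a * (g a - g b) - w H a b * f b * (g a - g b) := fun a b => by ring
  calc (∑ a, ∑ b, w H a b * (f a - f b) * (g a - g b))
      = ∑ a, ∑ b, (w H a b * f a * (g a - g b) - w H a b * f b * (g a - g b)) := by
        exact Finset.sum_congr rfl fun a _ => Finset.sum_congr rfl fun b _ => this a b
    _ = (∑ a, ∑ b, w H a b * f a * (g a - g b)) - ∑ a, ∑ b, w H a b * f b * (g a - g b) := by
        rw [← Finset.sum_sub_distrib]
        exact Finset.sum_congr rfl fun a _ => by rw [Finset.sum_sub_distrib]
    _ = 2 * ∑ a, ∑ b, w H a b * f a * (g a - g b) := by rw [hS2]; ring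

lemma Q_cs (H : (linear2Tree n).Subgraph) (f g : Fin n → ℝ) :
    Q H f g ^ 2 ≤ Q H f f * Q H g g := by
  have key : ∀ u v : Fin n → ℝ, Q H u v
      = ∑ p : Fin n × Fin n, (w H p.1 p.2 * (u p.1 - u p.2)) * (w H p.1 p.2 * (v p.1 - v p.2)) := by
    intro u v
    unfold Q
    rw [← Finset.sum_product', Finset.univ_product_univ]
    · refine (Finset.sum_congr rfl fun p _ => ?_).symm
      have := w_idem H p.1 p.2
      linear_combination (u p.1 - u p.2) * (v p.1 - v p.2) * this
  rw [key f g, key f f, key g g]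
  have := Finset.sum_mul_sq_le_sq_mul_sq Finset.univ
    (fun p : Fin n × Fin n => w H p.1 p.2 * (f p.1 - f p.2))
    (fun p : Fin n × Fin n => w H p.1 p.2 * (g p.1 - g p.2))
  calc (∑ p : Fin n × Fin n, (w H p.1 p.2 * (f p.1 - f p.2)) * (w H p.1 p.2 * (g p.1 - g p.2))) ^ 2
      ≤ (∑ p : Fin n × Fin n, (w H p.1 p.2 * (f p.1 - f p.2)) ^ 2)
        * ∑ p : Fin n × Fin n, (w H p.1 p.2 * (g p.1 - g p.2)) ^ 2 := this
    _ = _ := by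
        congr 1 <;> exact Finset.sum_congr rfl fun p _ => by rw [sq]

lemma Q_nonneg (H : (linear2Tree n).Subgraph) (g : Fin n → ℝ) : 0 ≤ Q H g g := by
  unfold Q
  refine Finset.sum_nonneg fun a _ => Finset.sum_nonneg fun b _ => ?_
  have : (0:ℝ) ≤ w H a b := by unfold w; positivity
  nlinarith [sq_nonneg (g a - g b)]

lemma Q_val_bound (H : (linear2Tree n).Subgraph) :
    Q H (fun t => (t.val : ℝ)) (fun t => (t.val : ℝ)) ≤ 20 * n := by
  unfold Q
  have hterm : ∀ a b : Fin n, w H a b * ((a.val : ℝ) - b.val) * ((a.val : ℝ) - b.val)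
      ≤ if (linear2Tree n).Adj a b then 4 else 0 := by
    intro a b
    unfold w
    by_cases h : H.Adj a b
    · rw [if_pos h, if_pos (H.adj_sub h), one_mul]
      have h2 := H.adj_sub h
      have hle1 : a.val ≤ b.val + 2 := h2.2.1
      have hle2 : b.val ≤ a.val + 2 := h2.2.2
      have hb1 : ((a.val : ℝ) - b.val) ≤ 2 := by
        have : (a.val : ℝ) ≤ (b.val : ℝ) + 2 := by exact_mod_cast hle1
        linarith
      have hb2 : (-2 : ℝ) ≤ ((a.val : ℝ) - b.val) := by
        have : (b.val : ℝ) ≤ (a.val : ℝ) + 2 := by exact_mod_cast hle2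
        linarith
      nlinarith
    · rw [if_neg h, zero_mul, zero_mul]
      split <;> norm_num
  have hrow : ∀ a : Fin n, (∑ b, if (linear2Tree n).Adj a b then (4:ℝ) else 0) ≤ 20 := by
    intro a
    rw [Finset.sum_ite, Finset.sum_const, Finset.sum_const_zero, add_zero, nsmul_eq_mul]
    have hcard : (Finset.univ.filter (fun b => (linear2Tree n).Adj a b)).card ≤ 5 := by
      have hmap : ∀ b ∈ Finset.univ.filter (fun b => (linear2Tree n).Adj a b),
          b.val ∈ Finset.Icc (a.val - 2) (a.val + 2) := by
        intro b hb
        have hadj : (linear2Tree n).Adj a b := (Finset.mem_filter.mp hb).2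
        have := hadj.2.1
        have := hadj.2.2
        simp only [Finset.mem_Icc]
        omega
      have := Finset.card_le_card_of_injOn Fin.val hmap
        (fun x _ y _ h => Fin.val_injective h)
      have hicc : (Finset.Icc (a.val - 2) (a.val + 2)).card ≤ 5 := by
        rw [Nat.card_Icc]; omega
      omega
    calc ((Finset.univ.filter (fun b => (linear2Tree n).Adj a b)).card : ℝ) * 4
        ≤ 5 * 4 := by
          have : ((Finset.univ.filter (fun b => (linear2Tree n).Adj a b)).card : ℝ) ≤ 5 := by
            exact_mod_cast hcard
          linarith
      _ = 20 := by norm_num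
  calc (∑ a : Fin n, ∑ b : Fin n, w H a b * ((a.val : ℝ) - b.val) * ((a.val : ℝ) - b.val))
      ≤ ∑ a : Fin n, ∑ b : Fin n, (if (linear2Tree n).Adj a b then (4:ℝ) else 0) := by
        exact Finset.sum_le_sum fun a _ => Finset.sum_le_sum fun b _ => hterm a b
    _ ≤ ∑ _a : Fin n, (20:ℝ) := Finset.sum_le_sum fun a _ => hrow a
    _ = 20 * n := by simp [mul_comm]

lemma dot_esrc {n : ℕ} (i j : Fin n) (u : Fin n → ℝ) :
    (∑ a, u a * esrc i j a) = u i - u j := by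
  unfold esrc
  simp [mul_sub, mul_ite, mul_one, mul_zero, Finset.sum_sub_distrib, Finset.sum_ite_eq']

lemma main_bound {n : ℕ} (hn : 3 ≤ n) (H : (linear2Tree n).Subgraph) (rn : ℝ)
    (v : Fin n → ℝ)
    (hv : (subLap H).mulVec v = esrc (⟨0, Nat.lt_of_lt_of_le (Nat.succ_pos 2) hn⟩ : Fin n) (⟨n - 1, Nat.sub_lt (Nat.lt_of_lt_of_le (Nat.succ_pos 2) hn) Nat.one_pos⟩ : Fin n))
    (hrv : rn = v ⟨0, Nat.lt_of_lt_of_le (Nat.succ_pos 2) hn⟩ - v ⟨n - 1, Nat.sub_lt (Nat.lt_of_lt_of_le (Nat.succ_pos 2) hn) Nat.one_pos⟩) :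
    (n : ℝ) / 40 ≤ rn := by
  set i : Fin n := ⟨0, Nat.lt_of_lt_of_le (Nat.succ_pos 2) hn⟩ with hi
  set j : Fin n := ⟨n - 1, Nat.sub_lt (Nat.lt_of_lt_of_le (Nat.succ_pos 2) hn) Nat.one_pos⟩ with hj
  set f : Fin n → ℝ := fun t => (t.val : ℝ) with hf
  have hQfv : Q H f v = 2 * (f i - f j) := by
    rw [dot_lap]
    have : (∑ a, f a * (subLap H).mulVec v a) = ∑ a, f a * esrc i j a := by
      refine Finset.sum_congr rfl fun a _ => ?_
      rw [hv]
    rw [this, dot_esrc]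
  have hQvv : Q H v v = 2 * rn := by
    rw [dot_lap]
    have : (∑ a, v a * (subLap H).mulVec v a) = ∑ a, v a * esrc i j a := by
      refine Finset.sum_congr rfl fun a _ => ?_
      rw [hv]
    rw [this, dot_esrc, hrv]
  have hcs := Q_cs H f v
  have hQff := Q_val_bound H
  have hQvv0 := Q_nonneg H v
  have hfi : f i = 0 := by simp [hf, hi]
  have hfj : f j = (n : ℝ) - 1 := by
    simp only [hf, hj]
    have : ((n - 1 : ℕ) : ℝ) = (n : ℝ) - 1 := by
      have : (1:ℕ) ≤ n := by omega
      push_cast [Nat.cast_sub this]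
      ring
    exact this
  have hQff' : Q H f f ≤ 20 * n := hQff
  have hmul : Q H f f * Q H v v ≤ (20 * n) * (2 * rn) := by
    rw [← hQvv]
    exact mul_le_mul_of_nonneg_right hQff' hQvv0
  have hkey : (2 * ((0:ℝ) - ((n:ℝ) - 1))) ^ 2 ≤ (20 * n) * (2 * rn) := by
    calc (2 * ((0:ℝ) - ((n:ℝ) - 1))) ^ 2 = (Q H f v) ^ 2 := by rw [hQfv, hfi, hfj]
      _ ≤ Q H f f * Q H v v := hcs
      _ ≤ (20 * n) * (2 * rn) := hmul
  have hn' : (3 : ℝ) ≤ (n : ℝ) := by exact_mod_cast hn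
  nlinarith [hkey, hn', sq_nonneg ((n:ℝ) - 2)]

end Stmt5Aux

/-- Let `H n` be any connected subgraph of the straight linear 2-tree on `n`
vertices whose vertex set contains the vertices `1` and `n`, and let `r n` be the resistance
distance in `H n` between vertices `1` and `n`. Then `r n → ∞` (in particular, taking
`H n = G_n`, the resistance distance of `G_n` between `1` and `n` tends to infinity). -/
theorem stmt5 (H : ∀ n, (linear2Tree n).Subgraph)
    (hconn : ∀ n, 3 ≤ n → (H n).Connected)
    (h1 : ∀ n (hn : 3 ≤ n), (⟨0, by omega⟩ : Fin n) ∈ (H n).verts)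
    (h2 : ∀ n (hn : 3 ≤ n), (⟨n - 1, by omega⟩ : Fin n) ∈ (H n).verts)
    (r : ℕ → ℝ)
    (hr : ∀ n (hn : 3 ≤ n),
      IsResistanceSub (H n) ⟨0, by omega⟩ ⟨n - 1, by omega⟩ (r n)) :
    Filter.Tendsto r Filter.atTop Filter.atTop := by
  have hlow : ∀ n : ℕ, 3 ≤ n → (n : ℝ) / 40 ≤ r n := by
    intro n hn
    obtain ⟨⟨v, hv⟩, huni⟩ := hr n hn
    exact Stmt5Aux.main_bound hn (H n) (r n) v hv (huni v hv)
  have htend : Filter.Tendsto (fun n : ℕ => (n : ℝ) / 40) Filter.atTop Filter.atTop :=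
    Filter.Tendsto.atTop_div_const (by norm_num) tendsto_natCast_atTop_atTop
  refine Filter.tendsto_atTop_mono' _ ?_ htend
  filter_upwards [Filter.eventually_ge_atTop 3] with n hn using hlow n hn
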